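/- Fix T > 0 and (t,x) ∈ [0,T]×ℝ^d. Let b : ℝ^d → ℝ^d and σ : ℝ^d → ℝ^{d×d} be continuous with a(y) = σ(y)σ(y)ᵀ symmetric positive definite for every y, and let h : ℝ^d → ℝ. Suppose G : [0,T]×ℝ^d → ℝ is continuously differentiable and satisfies exactly the Hamilton–Jacobi–Bellman equation G_t(s,y) + ⟨b(y), ∇_x G(s,y)⟩ − (1/2)‖σ(y)ᵀ∇_x G(s,y)‖² = 0 on [0,T)×ℝ^d with G(T,y) = h(y). Set ū(s,y) := −σ(y)ᵀ∇_x G(s,y). Then for every absolutely continuous path φ : [t,T] → ℝ^d with φ(t) = x and square-integrable derivative, ∫_t^T [ (1/2)‖φ̇(s) − (b(φ(s)) − σ(φ(s))ū(s,φ(s)))‖²_{a^{-1}(φ(s))} − ‖ū(s,φ(s))‖² ] ds + 2h(φ(T)) = S_{tT}(φ) + h(φ(T)) + G(t,x), where S_{tT}(φ) = ∫_t^T (1/2)‖φ̇(s) − b(φ(s))‖²_{a^{-1}(φ(s))} ds. Consequently, if in addition G(t,x) = inf { S_{tT}(φ) + h(φ(T)) : φ ∈ AC([t,T];ℝ^d),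 φ(t) = x }, then the infimum over such φ of the left-hand side equals 2G(t,x). -/

import Mathlib

open Real Filter MeasureTheory Matrix intervalIntegral Set
open scoped BigOperators

noncomputable section

/-- Partial derivative of `f : ℝ^d → ℝ` in the `i`-th coordinate direction. -/
noncomputable def pder {d : ℕ} (i : Fin d) (f : (Fin d → ℝ) → ℝ) (x : Fin d → ℝ) : ℝ :=
  fderiv ℝ f x (Pi.single i 1)

/-- Spatial gradient `∇_x f`. -/
noncomputable def gradv {d : ℕ} (f : (Fin d → ℝ) → ℝ) (x : Fin d → ℝ) : Fin d → ℝ :=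
  fun i => pder i f x

/-- Spatial Hessian `∇²_x f`. -/
noncomputable def hessm {d : ℕ} (f : (Fin d → ℝ) → ℝ) (x : Fin d → ℝ) :
    Matrix (Fin d) (Fin d) ℝ :=
  Matrix.of fun i j => pder i (fun y => pder j f y) x

/-- Euclidean inner product on `ℝ^d`. -/
def dotp {d : ℕ} (u v : Fin d → ℝ) : ℝ := ∑ i, u i * v i

/-- Matrix contraction `A : B = ∑_{i,j} A_{ij} B_{ij}`. -/
def mdot {d : ℕ} (A B : Matrix (Fin d) (Fin d) ℝ) : ℝ := ∑ i, ∑ j, A i j * B i j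

/-- `f(t,x)` is of class `C^{1,2}` on `ℝ × ℝ^d`: continuous, continuously
differentiable in `t` and twice continuously differentiable in `x`. -/
def C12 {d : ℕ} (f : ℝ → (Fin d → ℝ) → ℝ) : Prop :=
  Continuous (fun p : ℝ × (Fin d → ℝ) => f p.1 p.2) ∧
  (∀ x, Differentiable ℝ (fun s => f s x)) ∧
  Continuous (fun p : ℝ × (Fin d → ℝ) => deriv (fun s => f s p.2) p.1) ∧
  (∀ t, ContDiff ℝ 2 (f t)) ∧
  (∀ i, Continuous (fun p : ℝ × (Fin d → ℝ) => pder i (f p.1) p.2)) ∧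
  (∀ i j, Continuous (fun p : ℝ × (Fin d → ℝ) => hessm (f p.1) p.2 i j))

/-- `f(t,x)` is of class `C^1` on `ℝ × ℝ^d`. -/
def C1 {d : ℕ} (f : ℝ → (Fin d → ℝ) → ℝ) : Prop :=
  Continuous (fun p : ℝ × (Fin d → ℝ) => f p.1 p.2) ∧
  (∀ x, Differentiable ℝ (fun s => f s x)) ∧
  Continuous (fun p : ℝ × (Fin d → ℝ) => deriv (fun s => f s p.2) p.1) ∧
  (∀ t, Differentiable ℝ (f t)) ∧
  (∀ i, Continuous (fun p : ℝ × (Fin d → ℝ) => pder i (f p.1) p.2))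

open Topology

/-! Along an admissible path, `s ↦ G (s, φ s)` is absolutely continuous (`G` is `C¹`, hence
Lipschitz on compacts) and, by Lebesgue differentiation, the chain rule holds at almost every `s`,
so the fundamental theorem of calculus for absolutely continuous functions gives
`∫ₜᵀ (∂ₛG + ⟨∇G, φ'⟩) = h (φ T) - G (t, x)`. Completing the square in the `a⁻¹`-norm and using the
HJB equation shows that the controlled cost integrand is the action integrand minus exactly this
derivative. The infimum statement follows because the two cost functionals differ by the constant
`G (t, x)` on every admissible path. -/

namespace AbsolutelyContinuousOnInterval

variable {X Y : Type*} [PseudoMetricSpace X] [PseudoMetricSpace Y] {a b : ℝ}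

theorem of_dist_le_mul {f : ℝ → X} {g : ℝ → Y} (hg : AbsolutelyContinuousOnInterval g a b)
    (C : ℝ) (hfg : ∀ r ∈ uIcc a b, ∀ s ∈ uIcc a b, dist (f r) (f s) ≤ C * dist (g r) (g s)) :
    AbsolutelyContinuousOnInterval f a b := by
  refine squeeze_zero' (Eventually.of_forall fun _ => Finset.sum_nonneg fun _ _ => dist_nonneg)
    ?_ (by simpa using Tendsto.const_mul C hg)
  filter_upwards [eventually_inf_principal.2 (Eventually.of_forall fun _ h => h)] with E hE
  rw [Finset.mul_sum]
  exact Finset.sum_le_sum fun i hi => hfg _ (hE.1 i hi).1 _ (hE.1 i hi).2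

theorem prodMk {f : ℝ → X} {g : ℝ → Y} (hf : AbsolutelyContinuousOnInterval f a b)
    (hg : AbsolutelyContinuousOnInterval g a b) :
    AbsolutelyContinuousOnInterval (fun s => (f s, g s)) a b := by
  refine squeeze_zero (fun _ => Finset.sum_nonneg fun _ _ => dist_nonneg)
    (fun E => ?_) (by simpa using Tendsto.add hf hg)
  rw [← Finset.sum_add_distrib]
  exact Finset.sum_le_sum fun i _ => max_le_add_of_nonneg dist_nonneg dist_nonneg

end AbsolutelyContinuousOnInterval

theorem LipschitzOnWith.comp_absolutelyContinuousOnInterval {X Y : Type*} [PseudoMetricSpace X]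
    [PseudoMetricSpace Y] {F : X → Y} {K : NNReal} {S : Set X} (hF : LipschitzOnWith K F S)
    {f : ℝ → X} {a b : ℝ} (hf : AbsolutelyContinuousOnInterval f a b)
    (hfS : MapsTo f (uIcc a b) S) : AbsolutelyContinuousOnInterval (F ∘ f) a b :=
  hf.of_dist_le_mul K fun _ hr _ hs => hF.dist_le_mul _ (hfS hr) _ (hfS hs)

theorem IntervalIntegrable.absolutelyContinuousOnInterval_intervalIntegral'
    {E : Type*} [NormedAddCommGroup E] [NormedSpace ℝ E] {f : ℝ → E} {a b c : ℝ}
    (hf : IntervalIntegrable f volume a b) (hc : c ∈ uIcc a b) :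
    AbsolutelyContinuousOnInterval (fun x => ∫ v in c..x, f v) a b := by
  refine (hf.norm.absolutelyContinuousOnInterval_intervalIntegral hc).of_dist_le_mul 1
    fun _ hr _ hs => ?_
  have hint : ∀ {y}, y ∈ uIcc a b → IntervalIntegrable f volume c y :=
    fun hy => hf.mono_set (uIcc_subset_uIcc hc hy)
  rw [one_mul, dist_eq_norm, Real.dist_eq, intervalIntegral.integral_interval_sub_left
    (hint hr) (hint hs), intervalIntegral.integral_interval_sub_left (hint hr).norm (hint hs).norm]
  exact intervalIntegral.norm_integral_le_abs_integral_norm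

theorem AbsolutelyContinuousOnInterval.integral_fderiv_comp_eq_sub {E : Type*}
    [NormedAddCommGroup E] [NormedSpace ℝ E] {F : E → ℝ} (hF : ContDiff ℝ 1 F)
    {γ γ' : ℝ → E} {a b : ℝ} (hγ : AbsolutelyContinuousOnInterval γ a b)
    (hγ' : ∀ᵐ s, s ∈ uIcc a b → HasDerivAt γ (γ' s) s) :
    IntervalIntegrable (fun s => fderiv ℝ F (γ s) (γ' s)) volume a b ∧
      ∫ s in a..b, fderiv ℝ F (γ s) (γ' s) = F (γ b) - F (γ a) := by
  obtain ⟨K, hK⟩ := hF.locallyLipschitz.locallyLipschitzOn.exists_lipschitzOnWith_of_compact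
    (isCompact_uIcc.image_of_continuousOn hγ.continuousOn)
  have hFγ := hK.comp_absolutelyContinuousOnInterval hγ (mapsTo_image _ _)
  have hderiv : ∀ᵐ s, s ∈ uIoc a b → deriv (F ∘ γ) s = fderiv ℝ F (γ s) (γ' s) := by
    filter_upwards [hγ'] with s hs hsI
    exact ((hF.differentiable one_ne_zero (γ s)).hasFDerivAt.comp_hasDerivAt s
      (hs (uIoc_subset_uIcc hsI))).deriv
  refine ⟨hFγ.intervalIntegrable_deriv.congr_ae ?_, ?_⟩
  · exact (ae_restrict_iff' measurableSet_uIoc).2 hderiv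
  · rw [← intervalIntegral.integral_congr_ae hderiv, hFγ.integral_deriv_eq_sub]
    rfl

theorem absolutelyContinuousOnInterval_of_eqOn_intervalIntegral {E : Type*}
    [NormedAddCommGroup E] [NormedSpace ℝ E] {φ φ' : ℝ → E} {x : E} {a b : ℝ}
    (hφ' : IntervalIntegrable φ' volume a b)
    (hφ : EqOn φ (fun s => x + ∫ u in a..s, φ' u) (uIcc a b)) :
    AbsolutelyContinuousOnInterval φ a b :=
  (hφ'.absolutelyContinuousOnInterval_intervalIntegral' left_mem_uIcc).of_dist_le_mul 1
    fun _ hr _ hs => by rw [hφ hr, hφ hs, dist_add_left, one_mul]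

theorem ae_hasDerivAt_of_eqOn_intervalIntegral {E : Type*} [NormedAddCommGroup E]
    [NormedSpace ℝ E] [CompleteSpace E] {φ φ' : ℝ → E} {x : E} {a b : ℝ}
    (hφ' : IntervalIntegrable φ' volume a b)
    (hφ : EqOn φ (fun s => x + ∫ u in a..s, φ' u) (uIcc a b)) :
    ∀ᵐ s, s ∈ uIcc a b → HasDerivAt φ (φ' s) s := by
  have hne : ∀ c : ℝ, ∀ᵐ s, s ≠ c := fun c => by simp [ae_iff, measure_singleton]
  filter_upwards [hφ'.ae_hasDerivAt_integral, hne a, hne b] with s hs hsa hsb hsI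
  have hmem : uIcc a b ∈ 𝓝 s := by
    refine mem_of_superset (Ioo_mem_nhds ?_ ?_) Ioo_subset_Icc_self
    · exact lt_of_le_of_ne hsI.1 (by rcases min_choice a b with h | h <;> rw [h] <;> grind)
    · exact lt_of_le_of_ne' hsI.2 (by rcases max_choice a b with h | h <;> rw [h] <;> grind)
  exact ((hs hsI a left_mem_uIcc).const_add x).congr_of_eventuallyEq
    (Filter.mem_of_superset hmem fun r hr => hφ hr)

theorem fderiv_apply_eq_dotp_gradv {d : ℕ} (f : (Fin d → ℝ) → ℝ) (y v : Fin d → ℝ) :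
    fderiv ℝ f y v = dotp (gradv f y) v := by
  conv_lhs => rw [pi_eq_sum_univ' v]
  simp [dotp, gradv, pder, mul_comm]

namespace C1

variable {d : ℕ} {G : ℝ → (Fin d → ℝ) → ℝ}

theorem continuous_smulRight_deriv (hG : C1 G) :
    Continuous fun q : ℝ × (Fin d → ℝ) =>
      (1 : ℝ →L[ℝ] ℝ).smulRight (deriv (fun r => G r q.2) q.1) := by
  obtain ⟨-, -, hDtC, -, -⟩ := hG
  refine continuous_clm_apply.2 fun v => ?_
  simp only [ContinuousLinearMap.smulRight_apply, smul_eq_mul]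
  exact continuous_const.mul hDtC

theorem continuous_fderiv (hG : C1 G) :
    Continuous fun q : ℝ × (Fin d → ℝ) => fderiv ℝ (G q.1) q.2 := by
  obtain ⟨-, -, -, -, hpC⟩ := hG
  refine continuous_clm_apply.2 fun v => ?_
  simp only [fderiv_apply_eq_dotp_gradv, dotp, gradv]
  exact continuous_finsetSum _ fun i _ => (hpC i).mul continuous_const

theorem hasFDerivAt_uncurry (hG : C1 G) (p : ℝ × (Fin d → ℝ)) :
    HasFDerivAt (Function.uncurry G)
      (((1 : ℝ →L[ℝ] ℝ).smulRight (deriv (fun s => G s p.2) p.1)).coprod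
        (fderiv ℝ (G p.1) p.2)) p := by
  have hc₁ := hG.continuous_smulRight_deriv
  have hc₂ := hG.continuous_fderiv
  obtain ⟨-, hDt, -, hDx, -⟩ := hG
  exact (hasStrictFDerivAt_uncurry_coprod (f := G)
    (f₁ := fun s y => (1 : ℝ →L[ℝ] ℝ).smulRight (deriv (fun r => G r y) s))
    (f₂ := fun s y => fderiv ℝ (G s) y)
    (.of_forall fun q => (hDt q.2 q.1).hasDerivAt.hasFDerivAt)
    (.of_forall fun q => (hDx q.1 q.2).hasFDerivAt)
    hc₁.continuousAt hc₂.continuousAt).hasFDerivAt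

theorem contDiff_uncurry (hG : C1 G) : ContDiff ℝ 1 (Function.uncurry G) :=
  contDiff_one_iff_hasFDerivAt.2 ⟨_,
    hG.continuous_smulRight_deriv.continuousLinearMapCoprod hG.continuous_fderiv,
    hG.hasFDerivAt_uncurry⟩

theorem fderiv_uncurry_apply (hG : C1 G) (s : ℝ) (y v : Fin d → ℝ) :
    fderiv ℝ (Function.uncurry G) (s, y) (1, v) =
      deriv (fun r => G r y) s + dotp (gradv (G s) y) v := by
  simp [(hG.hasFDerivAt_uncurry (s, y)).fderiv, fderiv_apply_eq_dotp_gradv]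

theorem integral_chainRule_eq_sub (hG : C1 G) {φ φ' : ℝ → Fin d → ℝ} {x : Fin d → ℝ} {a b : ℝ}
    (hφ' : IntervalIntegrable φ' volume a b)
    (hφ : EqOn φ (fun s => x + ∫ u in a..s, φ' u) (uIcc a b)) :
    IntervalIntegrable
        (fun s => deriv (fun r => G r (φ s)) s + dotp (gradv (G s) (φ s)) (φ' s)) volume a b ∧
      ∫ s in a..b, (deriv (fun r => G r (φ s)) s + dotp (gradv (G s) (φ s)) (φ' s)) =
        G b (φ b) - G a (φ a) := by
  have hγAC : AbsolutelyContinuousOnInterval (fun s => (s, φ s)) a b :=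
    (LipschitzWith.id.lipschitzOnWith.absolutelyContinuousOnInterval).prodMk
      (absolutelyContinuousOnInterval_of_eqOn_intervalIntegral hφ' hφ)
  have hγ' : ∀ᵐ s, s ∈ uIcc a b → HasDerivAt (fun s => (s, φ s)) ((1 : ℝ), φ' s) s := by
    filter_upwards [ae_hasDerivAt_of_eqOn_intervalIntegral hφ' hφ] with s hs hsI
    exact (hasDerivAt_id s).prodMk (hs hsI)
  simpa only [hG.fderiv_uncurry_apply, Function.uncurry_apply_pair] using
    hγAC.integral_fderiv_comp_eq_sub hG.contDiff_uncurry hγ'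

end C1

section

variable {d : ℕ}

theorem dotp_eq_dotProduct (u v : Fin d → ℝ) : dotp u v = u ⬝ᵥ v := rfl

theorem abs_mul_le_dotp_self (w : Fin d → ℝ) (i j : Fin d) : |w i * w j| ≤ dotp w w := by
  have hsq : ∀ k, w k * w k ≤ dotp w w := fun k =>
    Finset.single_le_sum (f := fun k => w k * w k) (fun k _ => mul_self_nonneg _)
      (Finset.mem_univ k)
  rw [abs_le]
  constructor <;> nlinarith [hsq i, hsq j, sq_nonneg (w i + w j), sq_nonneg (w i - w j)]

theorem dotp_mulVec_eq_sum (N : Matrix (Fin d) (Fin d) ℝ) (w : Fin d → ℝ) :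
    dotp w (N *ᵥ w) = ∑ i, ∑ j, N i j * (w i * w j) := by
  simp only [dotp, mulVec, dotProduct, Finset.mul_sum]
  exact Finset.sum_congr rfl fun i _ => Finset.sum_congr rfl fun j _ => by ring

theorem dotp_sub_sub (u v : Fin d → ℝ) :
    dotp (u - v) (u - v) = dotp u u - 2 * dotp u v + dotp v v := by
  simp only [dotp, Pi.sub_apply, Finset.mul_sum, ← Finset.sum_sub_distrib,
    ← Finset.sum_add_distrib]
  exact Finset.sum_congr rfl fun i _ => by ring

variable {a b : ℝ}

theorem IntervalIntegrable.fun_sum {ι : Type*} (S : Finset ι) {f : ι → ℝ → ℝ}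
    (h : ∀ i ∈ S, IntervalIntegrable (f i) volume a b) :
    IntervalIntegrable (fun s => ∑ i ∈ S, f i s) volume a b :=
  ⟨integrable_finsetSum S fun i hi => (h i hi).1, integrable_finsetSum S fun i hi => (h i hi).2⟩

theorem IntervalIntegrable.mul_apply_of_dotp_self {w : ℝ → Fin d → ℝ}
    (hw : IntervalIntegrable w volume a b)
    (hww : IntervalIntegrable (fun s => dotp (w s) (w s)) volume a b) (i j : Fin d) :
    IntervalIntegrable (fun s => w s i * w s j) volume a b := by
  have hm : AEStronglyMeasurable w (volume.restrict (uIoc a b)) := hw.def'.aestronglyMeasurable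
  exact hww.mono_fun' (((continuous_apply i).comp_aestronglyMeasurable hm).mul
    ((continuous_apply j).comp_aestronglyMeasurable hm))
    (.of_forall fun s => abs_mul_le_dotp_self (w s) i j)

theorem intervalIntegrable_dotp_mulVec {w : ℝ → Fin d → ℝ}
    {N : ℝ → Matrix (Fin d) (Fin d) ℝ} (hw : IntervalIntegrable w volume a b)
    (hww : IntervalIntegrable (fun s => dotp (w s) (w s)) volume a b)
    (hN : ContinuousOn N (uIcc a b)) :
    IntervalIntegrable (fun s => dotp (w s) (N s *ᵥ w s)) volume a b := by
  have hterm : ∀ i j, IntervalIntegrable (fun s => N s i j * (w s i * w s j)) volume a b :=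
    fun i j => (hw.mul_apply_of_dotp_self hww i j).continuousOn_mul
      ((continuous_apply j).comp_continuousOn ((continuous_apply i).comp_continuousOn hN))
  simpa only [dotp_mulVec_eq_sum] using
    IntervalIntegrable.fun_sum _ fun i _ => IntervalIntegrable.fun_sum _ fun j _ => hterm i j

theorem intervalIntegrable_dotp_sub_self {u v : ℝ → Fin d → ℝ}
    (hu : IntervalIntegrable u volume a b)
    (huu : IntervalIntegrable (fun s => dotp (u s) (u s)) volume a b)
    (hv : ContinuousOn v (uIcc a b)) :
    IntervalIntegrable (fun s => dotp (u s - v s) (u s - v s)) volume a b := by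
  have hcross : IntervalIntegrable (fun s => dotp (u s) (v s)) volume a b :=
    IntervalIntegrable.fun_sum _ fun i _ =>
      IntervalIntegrable.mul_continuousOn (f := fun s => u s i) (g := fun s => v s i)
        ⟨hu.1.eval i, hu.2.eval i⟩ ((continuous_apply i).comp_continuousOn hv)
  simp only [dotp_sub_sub]
  refine (huu.sub (hcross.const_mul 2)).add (ContinuousOn.intervalIntegrable ?_)
  simp only [dotp]
  fun_prop

end

theorem Continuous.matrix_inv_of_isUnit_det {X : Type*} [TopologicalSpace X] {n : Type*}
    [Fintype n] [DecidableEq n] {A : X → Matrix n n ℝ} (hA : Continuous A)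
    (hdet : ∀ x, IsUnit (A x).det) : Continuous fun x => (A x)⁻¹ :=
  continuous_iff_continuousAt.2 fun x =>
    (continuousAt_matrix_inv _ (NormedRing.inverse_continuousAt (hdet x).unit)).comp
      hA.continuousAt

theorem controlled_action_integrand_eq {d : ℕ} (A : Matrix (Fin d) (Fin d) ℝ)
    (hA : IsUnit (A * Aᵀ).det) {τ : ℝ} {p β : Fin d → ℝ}
    (hhjb : τ + dotp β p - (1 / 2) * dotp (Aᵀ *ᵥ p) (Aᵀ *ᵥ p) = 0) (v : Fin d → ℝ) :
    (1 / 2) * dotp (v - (β - A *ᵥ -(Aᵀ *ᵥ p))) ((A * Aᵀ)⁻¹ *ᵥ (v - (β - A *ᵥ -(Aᵀ *ᵥ p))))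
        - dotp (-(Aᵀ *ᵥ p)) (-(Aᵀ *ᵥ p))
      = (1 / 2) * dotp (v - β) ((A * Aᵀ)⁻¹ *ᵥ (v - β)) - (τ + dotp p v) := by
  have hsymm : (A * Aᵀ)ᵀ = A * Aᵀ := by rw [transpose_mul, transpose_transpose]
  have hshift : v - (β - A *ᵥ -(Aᵀ *ᵥ p)) = (v - β) - (A * Aᵀ) *ᵥ p := by
    rw [mulVec_neg, mulVec_mulVec]; abel
  have h1 : (A * Aᵀ)⁻¹ *ᵥ ((A * Aᵀ) *ᵥ p) = p := by
    rw [mulVec_mulVec, nonsing_inv_mul _ hA, one_mulVec]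
  have h2 : ((A * Aᵀ) *ᵥ p) ⬝ᵥ ((A * Aᵀ)⁻¹ *ᵥ (v - β)) = (v - β) ⬝ᵥ p := by
    rw [dotProduct_mulVec, vecMul_mulVec, ← mulVec_transpose, hsymm, mul_nonsing_inv _ hA,
      transpose_one, one_mulVec, dotProduct_comm]
  have h3 : ((A * Aᵀ) *ᵥ p) ⬝ᵥ p = (Aᵀ *ᵥ p) ⬝ᵥ (Aᵀ *ᵥ p) := by
    rw [← mulVec_mulVec, dotProduct_comm, dotProduct_mulVec, ← mulVec_transpose]
  have hwp : (v - β) ⬝ᵥ p = v ⬝ᵥ p - β ⬝ᵥ p := sub_dotProduct _ _ _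
  simp only [dotp_eq_dotProduct] at hhjb ⊢
  rw [hshift, dotProduct_comm p v]
  generalize v - β = w at h2 hwp ⊢
  rw [mulVec_sub, h1, sub_dotProduct, dotProduct_sub, dotProduct_sub, h2, h3, neg_dotProduct_neg]
  linarith

theorem importanceSampling_cost_eq {d : ℕ} {T t : ℝ} {x : Fin d → ℝ} (ht : 0 ≤ t) (htT : t ≤ T)
    {b : (Fin d → ℝ) → (Fin d → ℝ)} {σ : (Fin d → ℝ) → Matrix (Fin d) (Fin d) ℝ}
    {h : (Fin d → ℝ) → ℝ} (hbC : Continuous b) (hσC : Continuous σ)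
    (haPD : ∀ y, (σ y * (σ y)ᵀ).PosDef) {G : ℝ → (Fin d → ℝ) → ℝ} (hGreg : C1 G)
    (hGpde : ∀ s y, 0 ≤ s → s < T →
      deriv (fun r => G r y) s
        + dotp (b y) (gradv (G s) y)
        - (1 / 2) * dotp ((σ y)ᵀ *ᵥ gradv (G s) y) ((σ y)ᵀ *ᵥ gradv (G s) y) = 0)
    (hGT : ∀ y, G T y = h y) {ubar : ℝ → (Fin d → ℝ) → (Fin d → ℝ)}
    (hubar : ∀ s y, ubar s y = -((σ y)ᵀ *ᵥ gradv (G s) y)) {φ φ' : ℝ → (Fin d → ℝ)}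
    (hφt : φ t = x) (hφ : ∀ s ∈ Set.Icc t T, φ s = x + ∫ u in t..s, φ' u)
    (hφ' : IntervalIntegrable φ' volume t T)
    (hφ'sq : IntervalIntegrable (fun s => dotp (φ' s) (φ' s)) volume t T) :
    (∫ s in t..T,
        ((1 / 2) * dotp (φ' s - (b (φ s) - (σ (φ s)) *ᵥ (ubar s (φ s))))
            ((σ (φ s) * (σ (φ s))ᵀ)⁻¹
              *ᵥ (φ' s - (b (φ s) - (σ (φ s)) *ᵥ (ubar s (φ s)))))
          - dotp (ubar s (φ s)) (ubar s (φ s))))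
        + 2 * h (φ T)
      = (∫ s in t..T,
          (1 / 2) * dotp (φ' s - b (φ s))
            ((σ (φ s) * (σ (φ s))ᵀ)⁻¹ *ᵥ (φ' s - b (φ s))))
        + h (φ T) + G t x := by
  have hφEq : EqOn φ (fun s => x + ∫ u in t..s, φ' u) (uIcc t T) := by rwa [uIcc_of_le htT]
  obtain ⟨hψ, hψint⟩ := hGreg.integral_chainRule_eq_sub hφ' hφEq
  have hφc := (absolutelyContinuousOnInterval_of_eqOn_intervalIntegral hφ' hφEq).continuousOn
  have hdet : ∀ y, IsUnit (σ y * (σ y)ᵀ).det := fun y =>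
    isUnit_iff_ne_zero.2 (haPD y).det_pos.ne'
  have hbφ : ContinuousOn (fun s => b (φ s)) (uIcc t T) := hbC.comp_continuousOn hφc
  have hN : ContinuousOn (fun s => (σ (φ s) * (σ (φ s))ᵀ)⁻¹) (uIcc t T) :=
    ((hσC.matrix_mul hσC.matrix_transpose).matrix_inv_of_isUnit_det hdet).comp_continuousOn hφc
  have hS := (intervalIntegrable_dotp_mulVec (hφ'.sub hbφ.intervalIntegrable)
    (intervalIntegrable_dotp_sub_self hφ' hφ'sq hbφ) hN).const_mul (1 / 2)
  have hne : ∀ᵐ s : ℝ, s ≠ T := by simp [ae_iff, measure_singleton]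
  simp only [hubar]
  have hpt : ∀ᵐ s, s ∈ uIoc t T → _ = _ := hne.mono fun s hsT hs =>
    controlled_action_integrand_eq (σ (φ s)) (hdet _) (p := gradv (G s) (φ s))
      (hGpde s (φ s) (ht.trans (uIoc_of_le htT ▸ hs).1.le)
        (lt_of_le_of_ne (uIoc_of_le htT ▸ hs).2 hsT)) (φ' s)
  rw [intervalIntegral.integral_congr_ae hpt, intervalIntegral.integral_sub hS hψ, hψint, hφt,
    hGT]
  ring

theorem EReal.sInf_image_add_coe (S : Set EReal) (c : ℝ) :
    sInf ((· + (c : EReal)) '' S) = sInf S + c := by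
  have gc : GaloisConnection (· - (c : EReal)) (· + (c : EReal)) := fun _ _ =>
    EReal.sub_le_iff_le_add (.inl (EReal.coe_ne_bot c)) (.inl (EReal.coe_ne_top c))
  rw [sInf_image, gc.u_sInf]

theorem stmt_8_general (d : ℕ) (T : ℝ) (t : ℝ) (x : Fin d → ℝ)
    (ht : 0 ≤ t) (htT : t ≤ T)
    (b : (Fin d → ℝ) → (Fin d → ℝ))
    (σ : (Fin d → ℝ) → Matrix (Fin d) (Fin d) ℝ)
    (h : (Fin d → ℝ) → ℝ)
    (hbC : Continuous b) (hσC : Continuous σ)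
    (haPD : ∀ y, (σ y * (σ y)ᵀ).PosDef)
    (G : ℝ → (Fin d → ℝ) → ℝ)
    (hGreg : C1 G)
    (hGpde : ∀ s y, 0 ≤ s → s < T →
      deriv (fun r => G r y) s
        + dotp (b y) (gradv (G s) y)
        - (1 / 2) * dotp ((σ y)ᵀ *ᵥ gradv (G s) y) ((σ y)ᵀ *ᵥ gradv (G s) y) = 0)
    (hGT : ∀ y, G T y = h y)
    (ubar : ℝ → (Fin d → ℝ) → (Fin d → ℝ))
    (hubar : ∀ s y, ubar s y = -((σ y)ᵀ *ᵥ gradv (G s) y)) :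
    (∀ φ φ' : ℝ → (Fin d → ℝ),
      φ t = x →
      (∀ s ∈ Set.Icc t T, φ s = x + ∫ u in t..s, φ' u) →
      IntervalIntegrable φ' MeasureTheory.volume t T →
      IntervalIntegrable (fun s => dotp (φ' s) (φ' s)) MeasureTheory.volume t T →
      (∫ s in t..T,
        ((1 / 2) * dotp (φ' s - (b (φ s) - (σ (φ s)) *ᵥ (ubar s (φ s))))
            ((σ (φ s) * (σ (φ s))ᵀ)⁻¹
              *ᵥ (φ' s - (b (φ s) - (σ (φ s)) *ᵥ (ubar s (φ s)))))
          - dotp (ubar s (φ s)) (ubar s (φ s))))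
        + 2 * h (φ T)
      = (∫ s in t..T,
          (1 / 2) * dotp (φ' s - b (φ s))
            ((σ (φ s) * (σ (φ s))ᵀ)⁻¹ *ᵥ (φ' s - b (φ s))))
        + h (φ T) + G t x)
    ∧
    (((G t x : ℝ) : EReal) =
        sInf {r : EReal | ∃ φ φ' : ℝ → (Fin d → ℝ),
          φ t = x ∧
          (∀ s ∈ Set.Icc t T, φ s = x + ∫ u in t..s, φ' u) ∧
          IntervalIntegrable φ' MeasureTheory.volume t T ∧
          IntervalIntegrable (fun s => dotp (φ' s) (φ' s)) MeasureTheory.volume t T ∧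
          r = (((∫ s in t..T,
              (1 / 2) * dotp (φ' s - b (φ s))
                ((σ (φ s) * (σ (φ s))ᵀ)⁻¹ *ᵥ (φ' s - b (φ s))))
            + h (φ T) : ℝ) : EReal)} →
      sInf {r : EReal | ∃ φ φ' : ℝ → (Fin d → ℝ),
          φ t = x ∧
          (∀ s ∈ Set.Icc t T, φ s = x + ∫ u in t..s, φ' u) ∧
          IntervalIntegrable φ' MeasureTheory.volume t T ∧
          IntervalIntegrable (fun s => dotp (φ' s) (φ' s)) MeasureTheory.volume t T ∧
          r = (((∫ s in t..T,
              ((1 / 2) * dotp (φ' s - (b (φ s) - (σ (φ s)) *ᵥ (ubar s (φ s))))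
                  ((σ (φ s) * (σ (φ s))ᵀ)⁻¹
                    *ᵥ (φ' s - (b (φ s) - (σ (φ s)) *ᵥ (ubar s (φ s)))))
                - dotp (ubar s (φ s)) (ubar s (φ s))))
            + 2 * h (φ T) : ℝ) : EReal)}
        = ((2 * G t x : ℝ) : EReal)) := by
  have hcost := fun φ φ' => importanceSampling_cost_eq (x := x) (φ := φ) (φ' := φ') ht htT
    hbC hσC haPD hGreg hGpde hGT hubar
  refine ⟨hcost, fun hinf => ?_⟩
  rw [two_mul, EReal.coe_add]
  nth_rewrite 1 [hinf]
  rw [← EReal.sInf_image_add_coe]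
  congr 1
  ext r
  constructor
  · rintro ⟨φ, φ', hφt, hφ, hφ', hφ'sq, rfl⟩
    exact ⟨_, ⟨φ, φ', hφt, hφ, hφ', hφ'sq, rfl⟩, by
      rw [hcost φ φ' hφt hφ hφ' hφ'sq]; exact (EReal.coe_add _ _).symm⟩
  · rintro ⟨-, ⟨φ, φ', hφt, hφ, hφ', hφ'sq, rfl⟩, rfl⟩
    exact ⟨φ, φ', hφt, hφ, hφ', hφ'sq, by
      rw [hcost φ φ' hφt hφ hφ' hφ'sq]; exact EReal.coe_add _ _⟩

/-- For the control `ū = -σᵀ∇G` built from an exact classical solution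
`G` of the HJB equation, the importance sampling cost of every admissible path equals
`S_{tT}(φ) + h(φ(T)) + G(t,x)`; consequently, if `G(t,x)` is the infimum of
`S_{tT}(φ) + h(φ(T))`, the infimum of the left-hand side equals `2G(t,x)`. -/
theorem stmt_8 (d : ℕ) (T : ℝ) (hT : 0 < T) (t : ℝ) (x : Fin d → ℝ)
    (ht : 0 ≤ t) (htT : t ≤ T)
    (b : (Fin d → ℝ) → (Fin d → ℝ))
    (σ : (Fin d → ℝ) → Matrix (Fin d) (Fin d) ℝ)
    (h : (Fin d → ℝ) → ℝ)
    (hbC : Continuous b) (hσC : Continuous σ)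
    (haPD : ∀ y, (σ y * (σ y)ᵀ).PosDef)
    (G : ℝ → (Fin d → ℝ) → ℝ)
    (hGreg : C1 G)
    (hGpde : ∀ s y, 0 ≤ s → s < T →
      deriv (fun r => G r y) s
        + dotp (b y) (gradv (G s) y)
        - (1 / 2) * dotp ((σ y)ᵀ *ᵥ gradv (G s) y) ((σ y)ᵀ *ᵥ gradv (G s) y) = 0)
    (hGT : ∀ y, G T y = h y)
    (ubar : ℝ → (Fin d → ℝ) → (Fin d → ℝ))
    (hubar : ∀ s y, ubar s y = -((σ y)ᵀ *ᵥ gradv (G s) y)) :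
    (∀ φ φ' : ℝ → (Fin d → ℝ),
      φ t = x →
      (∀ s ∈ Set.Icc t T, φ s = x + ∫ u in t..s, φ' u) →
      IntervalIntegrable φ' MeasureTheory.volume t T →
      IntervalIntegrable (fun s => dotp (φ' s) (φ' s)) MeasureTheory.volume t T →
      (∫ s in t..T,
        ((1 / 2) * dotp (φ' s - (b (φ s) - (σ (φ s)) *ᵥ (ubar s (φ s))))
            ((σ (φ s) * (σ (φ s))ᵀ)⁻¹
              *ᵥ (φ' s - (b (φ s) - (σ (φ s)) *ᵥ (ubar s (φ s)))))
          - dotp (ubar s (φ s)) (ubar s (φ s))))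
        + 2 * h (φ T)
      = (∫ s in t..T,
          (1 / 2) * dotp (φ' s - b (φ s))
            ((σ (φ s) * (σ (φ s))ᵀ)⁻¹ *ᵥ (φ' s - b (φ s))))
        + h (φ T) + G t x)
    ∧
    (((G t x : ℝ) : EReal) =
        sInf {r : EReal | ∃ φ φ' : ℝ → (Fin d → ℝ),
          φ t = x ∧
          (∀ s ∈ Set.Icc t T, φ s = x + ∫ u in t..s, φ' u) ∧
          IntervalIntegrable φ' MeasureTheory.volume t T ∧
          IntervalIntegrable (fun s => dotp (φ' s) (φ' s)) MeasureTheory.volume t T ∧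
          r = (((∫ s in t..T,
              (1 / 2) * dotp (φ' s - b (φ s))
                ((σ (φ s) * (σ (φ s))ᵀ)⁻¹ *ᵥ (φ' s - b (φ s))))
            + h (φ T) : ℝ) : EReal)} →
      sInf {r : EReal | ∃ φ φ' : ℝ → (Fin d → ℝ),
          φ t = x ∧
          (∀ s ∈ Set.Icc t T, φ s = x + ∫ u in t..s, φ' u) ∧
          IntervalIntegrable φ' MeasureTheory.volume t T ∧
          IntervalIntegrable (fun s => dotp (φ' s) (φ' s)) MeasureTheory.volume t T ∧
          r = (((∫ s in t..T,
              ((1 / 2) * dotp (φ' s - (b (φ s) - (σ (φ s)) *ᵥ (ubar s (φ s))))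
                  ((σ (φ s) * (σ (φ s))ᵀ)⁻¹
                    *ᵥ (φ' s - (b (φ s) - (σ (φ s)) *ᵥ (ubar s (φ s)))))
                - dotp (ubar s (φ s)) (ubar s (φ s))))
            + 2 * h (φ T) : ℝ) : EReal)}
        = ((2 * G t x : ℝ) : EReal)) :=
  stmt_8_general d T t x ht htT b σ h hbC hσC haPD G hGreg hGpde hGT ubar hubar
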